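/- For every nondeterministic Büchi automaton A over a finite alphabet Σ there exists a nondeterministic Büchi automaton B over Σ such that J_∃⊞(B) = J(A). -/

import Mathlib

/-!
A `k`-window permutation preserves Parikh images, so `J_∃⊞(B) ⊆ J(M)` as soon as `L(B) ⊆ J(M)`.
The automaton `B` runs `M` up to some state `q`, guesses the set `T` of letters occurring
infinitely often, and jumps to a second phase provided `M` accepts from `q` a word over `T` in
which every letter of `T` occurs infinitely often; from then on it accepts exactly such words.
Splicing that word of `M` in after the jump shows `L(B) ⊆ J(M)`. Conversely, let `w' ∈ L(M)` have
the Parikh image of `w`, cut `w'` at a point `m` after which only letters of `T` occur, and take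
`k` so large that `w[0,k)` contains the multiset `w'[0,m)` and `w` is over `T` from `k` on. Then
`w'' = w'[0,m) · (w[0,k) ∖ w'[0,m)) · w[k,∞)` is a `k`-window permutation of `w` accepted by `B`.
-/

open scoped Classical

/-- A (nondeterministic) Büchi automaton over alphabet `A`, with a finite state set. -/
structure BuchiAutomaton (A : Type) : Type 1 where
  Q : Type
  fin : Fintype Q
  step : Q → A → Set Q
  init : Set Q
  accept : Set Q

attribute [instance] BuchiAutomaton.fin

/-- A run of the automaton on an infinite word. -/
def BuchiAutomaton.IsRun {A : Type} (M : BuchiAutomaton A) (w : ℕ → A) (ρ : ℕ → M.Q) : Prop :=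
  ρ 0 ∈ M.init ∧ ∀ i, ρ (i + 1) ∈ M.step (ρ i) (w i)

/-- The language of a Büchi automaton: words admitting a run visiting the accepting set
infinitely often. -/
def BuchiAutomaton.lang {A : Type} (M : BuchiAutomaton A) : Set (ℕ → A) :=
  {w | ∃ ρ, M.IsRun w ρ ∧ ∀ n, ∃ m, n ≤ m ∧ ρ m ∈ M.accept}

/-- A Büchi automaton is deterministic if it has a unique initial state and
every transition set is a singleton. -/
def BuchiAutomaton.Deterministic {A : Type} (M : BuchiAutomaton A) : Prop :=
  (∃ q, M.init = {q}) ∧ ∀ q a, ∃ p, M.step q a = {p}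

/-- Parikh image of an infinite word: number of occurrences of each letter (`⊤` if infinite). -/
noncomputable def parikhInf {A : Type} (w : ℕ → A) : A → ℕ∞ :=
  fun a => {i : ℕ | w i = a}.encard

/-- The jumping language of a Büchi automaton. -/
def JumpLang {A : Type} (M : BuchiAutomaton A) : Set (ℕ → A) :=
  {w | ∃ w', parikhInf w' = parikhInf w ∧ w' ∈ M.lang}

/-- Number of occurrences of letter `a` in the `i`-th window of size `k` of `w`. -/
noncomputable def winCount {A : Type} (w : ℕ → A) (k i : ℕ) (a : A) : ℕ :=
  {j : ℕ | k * i ≤ j ∧ j < k * i + k ∧ w j = a}.ncard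

/-- `w` and `w'` are `k`-window permutations of each other. -/
def KWinPerm {A : Type} (k : ℕ) (w w' : ℕ → A) : Prop :=
  ∀ i a, winCount w k i a = winCount w' k i a

/-- The `k`-window jumping language of a Büchi automaton. -/
def KWinLang {A : Type} (M : BuchiAutomaton A) (k : ℕ) : Set (ℕ → A) :=
  {w | ∃ w', KWinPerm k w' w ∧ w' ∈ M.lang}

/-- The `∃`-window jumping language of a Büchi automaton. -/
def EWinLang {A : Type} (M : BuchiAutomaton A) : Set (ℕ → A) :=
  {w | ∃ k, 1 ≤ k ∧ ∃ w', KWinPerm k w' w ∧ w' ∈ M.lang}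

/-- Linear subsets of `ℕ^A`. -/
def IsLinearSet' {A : Type} (R : Set (A → ℕ)) : Prop :=
  ∃ (b : A → ℕ) (P : Finset (A → ℕ)),
    R = {v | ∃ c : (A → ℕ) → ℕ, v = b + ∑ p ∈ P, c p • p}

/-- Semilinear sets: finite unions of linear sets. -/
def IsSemilinearSet' {A : Type} (R : Set (A → ℕ)) : Prop :=
  ∃ (n : ℕ) (f : Fin n → Set (A → ℕ)), (∀ i, IsLinearSet' (f i)) ∧ R = ⋃ i, f i

/-- A mask: a vector over `{0,∞}` with at least one `∞` coordinate. -/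
def IsMask {A : Type} (m : A → ℕ∞) : Prop :=
  (∀ a, m a = 0 ∨ m a = ⊤) ∧ ∃ a, m a = ⊤

/-- Adding a mask to a vector of naturals. -/
def maskAdd {A : Type} (x : A → ℕ) (m : A → ℕ∞) : A → ℕ∞ :=
  fun a => (x a : ℕ∞) + m a

/-- Adding a mask to a set of vectors, `R + m`. -/
def maskAddSet {A : Type} (R : Set (A → ℕ)) (m : A → ℕ∞) : Set (A → ℕ∞) :=
  (fun x => maskAdd x m) '' R

/-- `𝕄^A`: extended-natural vectors with at least one `∞` coordinate. -/
def MVecs (A : Type) : Set (A → ℕ∞) := {v | ∃ a, v a = ⊤}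

/-- Masked semilinear set: a union `⋃_m (S_m + m)` over all masks `m`, with each `S_m`
semilinear. -/
def IsMaskedSemilinear {A : Type} (S : Set (A → ℕ∞)) : Prop :=
  ∃ F : (A → ℕ∞) → Set (A → ℕ),
    (∀ m, IsMask m → IsSemilinearSet' (F m)) ∧
    S = ⋃ m ∈ {m' : A → ℕ∞ | IsMask m'}, maskAddSet (F m) m

/-- `R` is `m`-oblivious: membership only depends on the `m`-equivalence class. -/
def MOblivious {A : Type} (m : A → ℕ∞) (R : Set (A → ℕ)) : Prop :=
  ∀ u v : A → ℕ, maskAdd u m = maskAdd v m → (u ∈ R ↔ v ∈ R)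

/-- `E_m`: unit vectors at the `∞` coordinates of the mask `m`. -/
noncomputable def maskUnits {A : Type} [Fintype A] [DecidableEq A] (m : A → ℕ∞) :
    Finset (A → ℕ) :=
  (Finset.univ.filter (fun a => m a = ⊤)).image (fun a => Pi.single a 1)

/-- `R` is in canonical `m`-oblivious form. -/
def CanonicalOblivious {A : Type} [Fintype A] [DecidableEq A] (m : A → ℕ∞)
    (R : Set (A → ℕ)) : Prop :=
  ∃ (n : ℕ) (b : Fin n → (A → ℕ)) (P : Fin n → Finset (A → ℕ)),
    (∀ i a, m a = ⊤ → b i a = 0) ∧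
    (∀ i p, p ∈ P i → ∀ a, m a = ⊤ → p a = 0) ∧
    R = ⋃ i, {v | ∃ c : (A → ℕ) → ℕ, v = b i + ∑ p ∈ (P i ∪ maskUnits m), c p • p}

open Filter

namespace BuchiAutomaton

variable {A : Type} (M : BuchiAutomaton A)

def langFrom (q : M.Q) : Set (ℕ → A) :=
  {w | ∃ ρ : ℕ → M.Q, ρ 0 = q ∧ (∀ i, ρ (i + 1) ∈ M.step (ρ i) (w i)) ∧
    ∃ᶠ i in atTop, ρ i ∈ M.accept}

def Reaches (w : ℕ → A) (n : ℕ) (q : M.Q) : Prop :=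
  ∃ σ : ℕ → M.Q, σ 0 ∈ M.init ∧ (∀ j < n, σ (j + 1) ∈ M.step (σ j) (w j)) ∧ σ n = q

variable {M}

lemma Reaches.congr {w w' : ℕ → A} {n : ℕ} {q : M.Q} (h : M.Reaches w n q)
    (hw : ∀ j < n, w j = w' j) : M.Reaches w' n q := by
  obtain ⟨σ, h0, hstep, hn⟩ := h
  exact ⟨σ, h0, fun j hj => hw j hj ▸ hstep j hj, hn⟩

lemma drop_mem_langFrom {w : ℕ → A} {ρ : ℕ → M.Q} (hstep : ∀ i, ρ (i + 1) ∈ M.step (ρ i) (w i))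
    (hacc : ∃ᶠ i in atTop, ρ i ∈ M.accept) (n : ℕ) : Stream'.drop n w ∈ M.langFrom (ρ n) := by
  refine ⟨fun i => ρ (i + n), by simp, fun i => ?_, ?_⟩
  · show ρ (i + 1 + n) ∈ M.step (ρ (i + n)) (w (i + n))
    rw [Nat.add_right_comm]
    exact hstep (i + n)
  · rwa [← map_add_atTop_eq_nat n, frequently_map] at hacc

lemma mem_lang_iff_reaches {w : ℕ → A} (n : ℕ) :
    w ∈ M.lang ↔ ∃ q, M.Reaches w n q ∧ Stream'.drop n w ∈ M.langFrom q := by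
  constructor
  · rintro ⟨ρ, ⟨h0, hstep⟩, hacc⟩
    exact ⟨ρ n, ⟨ρ, h0, fun j _ => hstep j, rfl⟩,
      drop_mem_langFrom hstep (frequently_atTop.2 hacc) n⟩
  · rintro ⟨q, ⟨σ, h0, hσ, rfl⟩, τ, hτ0, hτ, hacc⟩
    refine ⟨fun j => if j < n then σ j else τ (j - n), ⟨?_, fun j => ?_⟩, ?_⟩
    · rcases Nat.eq_zero_or_pos n with rfl | hn
      · simpa [hτ0] using h0
      · simpa [hn] using h0
    · rcases lt_trichotomy (j + 1) n with hj | hj | hj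
      · simpa [hj, show j < n by omega] using hσ j (by omega)
      · simpa [← hj, hτ0] using hσ j (by omega)
      · have := hτ (j - n)
        rw [show j - n + 1 = j + 1 - n by omega] at this
        simpa [show ¬ j + 1 < n by omega, show ¬ j < n by omega, Stream'.drop, Stream'.get,
          show j - n + n = j by omega] using this
    · intro m
      obtain ⟨i, hi, hacc⟩ := frequently_atTop.1 hacc m
      exact ⟨i + n, by omega, by simpa using hacc⟩

end BuchiAutomaton

section FairWords

variable {A : Type}

lemma take_append_apply_of_lt (w v : ℕ → A) {n j : ℕ} (hj : j < n) :
    (Stream'.take n w ++ₛ v) j = w j := by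
  show (Stream'.take n w ++ₛ v).get j = w j
  rw [Stream'.get_append_left j (Stream'.take n w) v (by rwa [Stream'.length_take n w]),
    Stream'.take_get j n w]
  rfl

lemma drop_take_append (w v : ℕ → A) (n : ℕ) :
    Stream'.drop n (Stream'.take n w ++ₛ v) = v := by
  have h := Stream'.drop_append_stream (Stream'.take n w) v
  rwa [Stream'.length_take n w] at h

def IsFairWord (T : Set A) (v : ℕ → A) : Prop :=
  (∀ i, v i ∈ T) ∧ ∀ a ∈ T, ∃ᶠ i in atTop, v i = a

lemma frequently_drop_iff {w : ℕ → A} {n : ℕ} {P : A → Prop} :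
    (∃ᶠ i in atTop, P (Stream'.drop n w i)) ↔ ∃ᶠ i in atTop, P (w i) := by
  conv_rhs => rw [← map_add_atTop_eq_nat n, frequently_map]
  rfl

lemma isFairWord_drop_iff {T : Set A} {w : ℕ → A} {n : ℕ} :
    IsFairWord T (Stream'.drop n w) ↔ (∀ i ≥ n, w i ∈ T) ∧ ∀ a ∈ T, ∃ᶠ i in atTop, w i = a := by
  refine and_congr ⟨fun h i hi => ?_, fun h i => h (i + n) (by omega)⟩
    (forall₂_congr fun a _ => frequently_drop_iff (P := (· = a)))
  simpa [Stream'.drop, Stream'.get, show i - n + n = i by omega] using h (i - n)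

lemma IsFairWord.append {T : Set A} {u : List A} {v : ℕ → A} (hu : ∀ a ∈ u, a ∈ T)
    (hv : IsFairWord T v) : IsFairWord T (u ++ₛ v) := by
  have hdrop : IsFairWord T (Stream'.drop u.length (u ++ₛ v)) := by
    have : Stream'.drop u.length (u ++ₛ v) = v := Stream'.drop_append_stream u v
    rwa [this]
  refine ⟨fun i => ?_, (isFairWord_drop_iff.1 hdrop).2⟩
  by_cases hi : i < u.length
  · show (u ++ₛ v).get i ∈ T
    rw [Stream'.get_append_left i u v hi]
    exact hu _ (List.getElem_mem hi)
  · exact (isFairWord_drop_iff.1 hdrop).1 i (by omega)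

lemma eventually_isFairWord_drop [Finite A] (w : ℕ → A) :
    ∀ᶠ n in atTop, IsFairWord {a | ∃ᶠ i in atTop, w i = a} (Stream'.drop n w) := by
  have hT : ∀ᶠ i in atTop, ∀ a, a ∉ {a | ∃ᶠ i in atTop, w i = a} → w i ≠ a :=
    eventually_all.2 fun a => by
      by_cases ha : ∃ᶠ i in atTop, w i = a
      · exact .of_forall fun _ h => (h ha).elim
      · exact (not_frequently.1 ha).mono fun _ hi _ => hi
  filter_upwards [eventually_forall_ge_atTop.2 hT] with n hn
  exact isFairWord_drop_iff.2 ⟨fun i hi => by_contra fun h => hn i hi _ h rfl, fun _ ha => ha⟩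

def coverStep (T F : Set A) (a : A) : Set A :=
  if T ⊆ insert a F then ∅ else insert a F

def coverSeq (T : Set A) (v : ℕ → A) : ℕ → Set A
  | 0 => ∅
  | t + 1 => coverStep T (coverSeq T v t) (v t)

lemma frequently_eq_of_frequently_coverSeq_eq_empty {T : Set A} {v : ℕ → A}
    (h : ∃ᶠ t in atTop, coverSeq T v t = ∅) {a : A} (ha : a ∈ T) :
    ∃ᶠ i in atTop, v i = a := by
  by_contra hfin
  obtain ⟨m, hm⟩ := eventually_atTop.1 (not_frequently.1 hfin)
  obtain ⟨t₁, ht₁, h₁⟩ := frequently_atTop.1 h m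
  have hstep : ∀ t ≥ m, a ∉ coverSeq T v t →
      coverSeq T v (t + 1) = insert (v t) (coverSeq T v t) := fun t ht hat =>
    if_neg fun hT => (hT ha).elim (fun h => hm t ht h.symm) hat
  have hmiss : ∀ t ≥ t₁, a ∉ coverSeq T v t := by
    intro t ht
    induction t, ht using Nat.le_induction with
    | base => simp [h₁]
    | succ t ht ih =>
      rw [hstep t (by omega) ih]
      exact fun h => h.elim (fun h => hm t (by omega) h.symm) ih
  obtain ⟨t, ht, h₂⟩ := frequently_atTop.1 h (t₁ + 1)
  obtain ⟨s, rfl⟩ := Nat.exists_eq_add_one_of_ne_zero (by omega : t ≠ 0)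
  rw [hstep s (by omega) (hmiss s (by omega))] at h₂
  exact (Set.insert_nonempty _ _).ne_empty h₂

lemma frequently_coverSeq_eq_empty [Finite A] {T : Set A} {v : ℕ → A}
    (h : ∀ a ∈ T, ∃ᶠ i in atTop, v i = a) : ∃ᶠ t in atTop, coverSeq T v t = ∅ := by
  by_contra hne
  obtain ⟨t₀, ht₀⟩ := eventually_atTop.1 (not_frequently.1 hne)
  have hstep : ∀ t ≥ t₀, coverSeq T v (t + 1) = insert (v t) (coverSeq T v t) ∧
      ¬ T ⊆ insert (v t) (coverSeq T v t) := by
    intro t ht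
    by_cases hT : T ⊆ insert (v t) (coverSeq T v t)
    · exact (ht₀ (t + 1) (by omega) (if_pos hT)).elim
    · exact ⟨if_neg hT, hT⟩
  have hseen : ∀ t ≥ t₀, ∀ s, t₀ ≤ s → s < t → v s ∈ coverSeq T v t := by
    intro t ht
    induction t, ht using Nat.le_induction with
    | base => intro s hs hst; omega
    | succ t ht ih =>
      intro s hs hst
      rw [(hstep t ht).1]
      rcases Nat.lt_succ_iff_lt_or_eq.1 hst with hst | rfl
      · exact Set.mem_insert_of_mem _ (ih s hs hst)
      · exact Set.mem_insert _ _
  have hocc : ∀ᶠ t in atTop, t₀ ≤ t ∧ ∀ a, a ∈ T → ∃ s, t₀ ≤ s ∧ s < t ∧ v s = a := by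
    refine (eventually_ge_atTop t₀).and (eventually_all.2 fun a => ?_)
    by_cases ha : a ∈ T
    · obtain ⟨s, hs, hsa⟩ := frequently_atTop.1 (h a ha) t₀
      exact (eventually_gt_atTop s).mono fun t hst _ => ⟨s, hs, hst, hsa⟩
    · exact .of_forall fun _ h => (ha h).elim
  obtain ⟨t, ht, hall⟩ := hocc.exists
  refine (hstep t ht).2 fun a ha => Set.mem_insert_of_mem _ ?_
  obtain ⟨s, hs, hst, rfl⟩ := hall a ha
  exact hseen t ht s hs hst

end FairWords

section Parikh

variable {A : Type}

lemma count_take_drop_eq_ncard (w : ℕ → A) (a : A) (m n : ℕ) :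
    (Stream'.take n (Stream'.drop m w)).count a = {j | m ≤ j ∧ j < m + n ∧ w j = a}.ncard := by
  have hset : {j | m ≤ j ∧ j < m + n ∧ w j = a} = ↑{j ∈ Finset.Ico m (m + n) | w j = a} := by
    ext j; simp [and_assoc]
  rw [hset, Set.ncard_coe_finset, Finset.card_filter]
  clear hset
  induction n with
  | zero => simp
  | succ n ih =>
    rw [Stream'.take_succ', List.count_append, ih, ← Nat.add_assoc,
      Finset.sum_Ico_succ_top (by omega)]
    simp [Stream'.drop, Stream'.get, add_comm, List.count_singleton]

lemma winCount_eq_count (w : ℕ → A) (k i : ℕ) (a : A) :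
    winCount w k i a = (Stream'.take k (Stream'.drop (k * i) w)).count a :=
  (count_take_drop_eq_ncard w a _ _).symm

lemma count_take_eq_ncard (w : ℕ → A) (a : A) (n : ℕ) :
    (Stream'.take n w).count a = {j | j < n ∧ w j = a}.ncard := by
  have h := count_take_drop_eq_ncard w a 0 n
  simp only [zero_le, true_and, zero_add] at h
  exact h

lemma finite_setOf_lt_and (w : ℕ → A) (a : A) (n : ℕ) : {j | j < n ∧ w j = a}.Finite :=
  (Set.finite_Iio n).subset fun _ hj => hj.1

lemma count_take_le_parikhInf (w : ℕ → A) (a : A) (n : ℕ) :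
    ((Stream'.take n w).count a : ℕ∞) ≤ parikhInf w a := by
  rw [count_take_eq_ncard, (finite_setOf_lt_and w a n).cast_ncard_eq]
  exact Set.encard_le_encard fun _ hj => hj.2

lemma parikhInf_eq_count_take {w : ℕ → A} {a : A} {n : ℕ} (h : ∀ i ≥ n, w i ≠ a) :
    parikhInf w a = (Stream'.take n w).count a := by
  rw [count_take_eq_ncard, (finite_setOf_lt_and w a n).cast_ncard_eq]
  refine congrArg Set.encard (Set.ext fun j => ?_)
  exact ⟨fun hj => ⟨by_contra fun hn => h j (by omega) hj, hj⟩, And.right⟩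

lemma eventually_le_count_take {w : ℕ → A} {a : A} {c : ℕ} (h : (c : ℕ∞) ≤ parikhInf w a) :
    ∀ᶠ n in atTop, c ≤ (Stream'.take n w).count a := by
  obtain ⟨t, hts, htc⟩ := Set.exists_subset_encard_eq h
  obtain ⟨b, hb⟩ := (Set.finite_of_encard_eq_coe htc).bddAbove
  filter_upwards [eventually_gt_atTop b] with n hn
  rw [count_take_eq_ncard]
  calc c = t.ncard := by rw [Set.ncard_def, htc, ENat.toNat_natCast]
    _ ≤ _ := Set.ncard_le_ncard
      (fun j hj => show j < n ∧ w j = a from ⟨(hb hj).trans_lt hn, hts hj⟩)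
      (finite_setOf_lt_and w a n)

lemma parikhInf_eq_top_iff {w : ℕ → A} {a : A} :
    parikhInf w a = ⊤ ↔ ∃ᶠ i in atTop, w i = a :=
  Set.encard_eq_top_iff.trans Nat.frequently_atTop_iff_infinite.symm

lemma parikhInf_eq_of_isFairWord_drop {T : Set A} {w w' : ℕ → A} {n : ℕ}
    (hw : IsFairWord T (Stream'.drop n w)) (hw' : IsFairWord T (Stream'.drop n w'))
    (h : ∀ i < n, w i = w' i) : parikhInf w = parikhInf w' := by
  rw [isFairWord_drop_iff] at hw hw'
  funext a
  by_cases ha : a ∈ T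
  · rw [parikhInf_eq_top_iff.2 (hw.2 a ha), parikhInf_eq_top_iff.2 (hw'.2 a ha)]
  · refine congrArg Set.encard (Set.ext fun i => ?_)
    by_cases hi : i < n
    · exact iff_of_eq (congrArg (· = a) (h i hi))
    · exact iff_of_false (fun hwi => ha (hwi ▸ hw.1 i (by omega)))
        (fun hwi => ha (hwi ▸ hw'.1 i (by omega)))

lemma KWinPerm.symm {k : ℕ} {w w' : ℕ → A} (h : KWinPerm k w w') : KWinPerm k w' w :=
  fun i a => (h i a).symm

lemma KWinPerm.count_take_mul_eq {k : ℕ} {w w' : ℕ → A} (h : KWinPerm k w w') (N : ℕ) (a : A) :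
    (Stream'.take (k * N) w).count a = (Stream'.take (k * N) w').count a := by
  induction N with
  | zero => rfl
  | succ N ih =>
    rw [Nat.mul_succ, Stream'.take_add (k * N) k w, Stream'.take_add (k * N) k w',
      List.count_append, List.count_append, ih, ← winCount_eq_count, ← winCount_eq_count, h N a]

lemma KWinPerm.parikhInf_le {k : ℕ} (hk : 0 < k) {w w' : ℕ → A} (h : KWinPerm k w w') :
    parikhInf w ≤ parikhInf w' := by
  intro a
  refine ENat.forall_natCast_le_iff_le.1 fun c hc => ?_
  obtain ⟨N, hN⟩ := (eventually_le_count_take hc).exists_forall_of_atTop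
  calc (c : ℕ∞) ≤ (Stream'.take (k * N) w).count a := by
        exact_mod_cast hN _ (Nat.le_mul_of_pos_left N hk)
    _ = (Stream'.take (k * N) w').count a := by rw [h.count_take_mul_eq]
    _ ≤ parikhInf w' a := count_take_le_parikhInf w' a _

lemma KWinPerm.parikhInf_eq {k : ℕ} (hk : 0 < k) {w w' : ℕ → A} (h : KWinPerm k w w') :
    parikhInf w = parikhInf w' :=
  le_antisymm (h.parikhInf_le hk) (h.symm.parikhInf_le hk)

lemma kWinPerm_of_perm_take_of_drop_eq {k : ℕ} {w w' : ℕ → A}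
    (hp : (Stream'.take k w).Perm (Stream'.take k w')) (hd : Stream'.drop k w = Stream'.drop k w') :
    KWinPerm k w w' := by
  intro i a
  rw [winCount_eq_count, winCount_eq_count]
  cases i with
  | zero => exact hp.count_eq a
  | succ i =>
    rw [show k * (i + 1) = k + k * i by ring, ← Stream'.drop_drop (k * i) k w,
      ← Stream'.drop_drop (k * i) k w', hd]

lemma kWinPerm_append_append_drop {w : ℕ → A} {k : ℕ} {x L : List A}
    (h : (x ++ L).Perm (Stream'.take k w)) : KWinPerm k (x ++ₛ (L ++ₛ Stream'.drop k w)) w := by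
  have hlen : (x ++ L).length = k := h.length_eq.trans (Stream'.length_take k w)
  rw [← Stream'.append_append_stream]
  refine kWinPerm_of_perm_take_of_drop_eq ?_ ?_
  · rwa [Stream'.take_append_of_le_length k (x ++ L) (Stream'.drop k w) hlen.ge,
      List.take_of_length_le hlen.le]
  · have h := Stream'.drop_append_stream (x ++ L) (Stream'.drop k w)
    rwa [hlen] at h

end Parikh

lemma exists_inl_until_isRight {α β : Type*} {ρ : ℕ → α ⊕ β} {a₀ : α}
    (h0 : ρ 0 = .inl a₀) (hex : ∃ j, (ρ j).isRight) :
    ∃ n, ∃ σ : ℕ → α, (∀ j ≤ n, ρ j = .inl (σ j)) ∧ (ρ (n + 1)).isRight := by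
  obtain ⟨n, hn⟩ : ∃ n, Nat.find hex = n + 1 := by
    refine Nat.exists_eq_add_one_of_ne_zero fun h => ?_
    simpa [h, h0] using Nat.find_spec hex
  refine ⟨n, fun j => (ρ j).elim id fun _ => a₀, fun j hj => ?_, hn ▸ Nat.find_spec hex⟩
  have := Nat.find_min hex (show j < Nat.find hex by omega)
  cases h : ρ j with
  | inl a => simp [h]
  | inr b => simp [h] at this

namespace BuchiAutomaton

variable {A : Type}

def AcceptsFairWord (M : BuchiAutomaton A) (q : M.Q) (T : Set A) : Prop :=
  ∃ v ∈ M.langFrom q, IsFairWord T v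

/-- Phase `inl` runs `M`; from a state `p` with `M.AcceptsFairWord p T` it may jump, reading a
letter of `T`, to `inr (T, ∅)`. A phase-2 state `inr (T, F)` records the letters `F` read since
the last visit to the accepting state `inr (T, ∅)`. -/
noncomputable abbrev fairTailAutomaton [Fintype A] (M : BuchiAutomaton A) : BuchiAutomaton A where
  Q := M.Q ⊕ (Set A × Set A)
  fin := inferInstance
  step
    | .inl p, a => .inl '' M.step p a ∪
        {.inr (T, ∅) | (T : Set A) (_ : a ∈ T ∧ M.AcceptsFairWord p T)}
    | .inr (T, F), a => {s | a ∈ T ∧ s = .inr (T, coverStep T F a)}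
  init := .inl '' M.init
  accept := {s | ∃ T, s = .inr (T, ∅)}

variable [Fintype A] {M : BuchiAutomaton A}

lemma inl_mem_fairTailAutomaton_init {q : M.Q} :
    (.inl q : M.fairTailAutomaton.Q) ∈ M.fairTailAutomaton.init ↔ q ∈ M.init :=
  Sum.inl_injective.mem_set_image

lemma inl_mem_fairTailAutomaton_step {p q : M.Q} {a : A} :
    (.inl q : M.fairTailAutomaton.Q) ∈ M.fairTailAutomaton.step (.inl p) a ↔ q ∈ M.step p a := by
  show Sum.inl q ∈ (Sum.inl '' M.step p a ∪ _ : Set (M.Q ⊕ (Set A × Set A))) ↔ _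
  simp

lemma inr_mem_fairTailAutomaton_step {p : M.Q} {a : A} {T F : Set A} :
    (.inr (T, F) : M.fairTailAutomaton.Q) ∈ M.fairTailAutomaton.step (.inl p) a ↔
      F = ∅ ∧ a ∈ T ∧ M.AcceptsFairWord p T := by
  show Sum.inr (T, F) ∈ (Sum.inl '' M.step p a ∪ _ : Set (M.Q ⊕ (Set A × Set A))) ↔ _
  simp [and_comm, eq_comm]

lemma langFrom_fairTailAutomaton_inr_iff {T : Set A} {v : ℕ → A} :
    v ∈ M.fairTailAutomaton.langFrom (.inr (T, ∅)) ↔ IsFairWord T v := by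
  constructor
  · rintro ⟨ρ, h0, hstep, hacc⟩
    have hρ : ∀ t, ρ t = .inr (T, coverSeq T v t) := by
      intro t
      induction t with
      | zero => exact h0
      | succ t ih =>
        have := hstep t
        rw [ih] at this
        exact this.2
    have hv : ∀ t, v t ∈ T := fun t => by
      have := hstep t
      rw [hρ t] at this
      exact this.1
    refine ⟨hv, fun a ha => frequently_eq_of_frequently_coverSeq_eq_empty (hacc.mono ?_) ha⟩
    rintro t ⟨T', hT'⟩
    rw [hρ t] at hT'
    simp only [Sum.inr.injEq, Prod.mk.injEq] at hT'
    exact hT'.2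
  · rintro ⟨hv, hfreq⟩
    refine ⟨fun t => .inr (T, coverSeq T v t), rfl, fun t => ⟨hv t, rfl⟩, ?_⟩
    exact (frequently_coverSeq_eq_empty hfreq).mono fun t ht => ⟨T, by simp only [ht]⟩

lemma exists_reaches_of_mem_lang_fairTailAutomaton {w : ℕ → A}
    (hw : w ∈ M.fairTailAutomaton.lang) :
    ∃ n q T, M.Reaches w n q ∧ M.AcceptsFairWord q T ∧ IsFairWord T (Stream'.drop n w) := by
  obtain ⟨ρ, ⟨⟨q₀, hq₀, hρ₀⟩, hstep⟩, hacc⟩ := hw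
  have hex : ∃ j, (ρ j).isRight := by
    obtain ⟨j, -, T, hj⟩ := hacc 0
    exact ⟨j, by simp [hj]⟩
  obtain ⟨n, σ, hσ, hright⟩ := exists_inl_until_isRight hρ₀.symm hex
  obtain ⟨T, hT, hjump⟩ :
      ∃ T, ρ (n + 1) = .inr (T, ∅) ∧ w n ∈ T ∧ M.AcceptsFairWord (σ n) T := by
    have hjump := hstep n
    rw [hσ n le_rfl] at hjump
    rcases h : ρ (n + 1) with q | ⟨T, F⟩
    · simp [h] at hright
    · rw [h, inr_mem_fairTailAutomaton_step] at hjump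
      exact ⟨T, by rw [hjump.1], hjump.2⟩
  refine ⟨n, σ n, T, ⟨σ, ?_, fun j hj => ?_, rfl⟩, hjump.2, ?_⟩
  · exact Sum.inl_injective (hρ₀.trans (hσ 0 n.zero_le)) ▸ hq₀
  · have := hstep j
    rwa [hσ j hj.le, hσ (j + 1) hj, inl_mem_fairTailAutomaton_step] at this
  · have hdrop := drop_mem_langFrom hstep (frequently_atTop.2 hacc) (n + 1)
    rw [hT] at hdrop
    have hfair := isFairWord_drop_iff.1 (langFrom_fairTailAutomaton_inr_iff.1 hdrop)
    refine isFairWord_drop_iff.2 ⟨fun i hi => ?_, hfair.2⟩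
    rcases hi.eq_or_lt with rfl | hi
    · exact hjump.1
    · exact hfair.1 i hi

lemma Reaches.mem_lang_fairTailAutomaton {w : ℕ → A} {n : ℕ} {q : M.Q} {T : Set A}
    (hreach : M.Reaches w n q) (hq : M.AcceptsFairWord q T)
    (hfair : IsFairWord T (Stream'.drop n w)) : w ∈ M.fairTailAutomaton.lang := by
  obtain ⟨σ, h0, hσ, rfl⟩ := hreach
  rw [isFairWord_drop_iff] at hfair
  have hdrop : IsFairWord T (Stream'.drop (n + 1) w) :=
    isFairWord_drop_iff.2 ⟨fun i hi => hfair.1 i (by omega), hfair.2⟩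
  refine (mem_lang_iff_reaches (n + 1)).2 ⟨.inr (T, ∅),
    ⟨fun j => if j ≤ n then .inl (σ j) else .inr (T, ∅), ?_, fun j hj => ?_, by simp⟩,
    langFrom_fairTailAutomaton_inr_iff.2 hdrop⟩
  · simpa [inl_mem_fairTailAutomaton_init] using h0
  rcases Nat.lt_succ_iff_lt_or_eq.1 hj with hj | rfl
  · simpa [hj.le, show j + 1 ≤ n by omega, inl_mem_fairTailAutomaton_step] using hσ j hj
  · simpa [inr_mem_fairTailAutomaton_step] using ⟨hfair.1 j le_rfl, hq⟩

end BuchiAutomaton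

section Main

open BuchiAutomaton

variable {A : Type}

lemma eWinLang_subset_jumpLang {B M : BuchiAutomaton A} (h : B.lang ⊆ JumpLang M) :
    EWinLang B ⊆ JumpLang M := by
  rintro w ⟨k, hk, w₁, hperm, hw₁⟩
  obtain ⟨w₂, hw₂, hw₂M⟩ := h hw₁
  exact ⟨w₂, hw₂.trans (hperm.parikhInf_eq hk), hw₂M⟩

lemma lang_fairTailAutomaton_subset_jumpLang [Fintype A] (M : BuchiAutomaton A) :
    M.fairTailAutomaton.lang ⊆ JumpLang M := by
  intro w hw
  obtain ⟨n, q, T, hreach, ⟨v, hv, hvfair⟩, hfair⟩ :=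
    exists_reaches_of_mem_lang_fairTailAutomaton hw
  set w' : ℕ → A := Stream'.take n w ++ₛ v
  have hdrop : Stream'.drop n w' = v := drop_take_append w v n
  have hagree : ∀ j < n, w j = w' j := fun j hj => (take_append_apply_of_lt w v hj).symm
  refine ⟨w', parikhInf_eq_of_isFairWord_drop (hdrop ▸ hvfair) hfair
    fun j hj => (hagree j hj).symm, ?_⟩
  exact (mem_lang_iff_reaches n).2 ⟨q, hreach.congr hagree, hdrop ▸ hv⟩

lemma exists_kWinPerm_of_parikhInf_eq [Finite A] {w w' : ℕ → A}
    (hw : parikhInf w' = parikhInf w) {m : ℕ}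
    (hm : IsFairWord {a | ∃ᶠ i in atTop, w i = a} (Stream'.drop m w')) :
    ∃ k, 1 ≤ k ∧ ∃ w'', KWinPerm k w'' w ∧ (∀ j < m, w' j = w'' j) ∧
      IsFairWord {a | ∃ᶠ i in atTop, w i = a} (Stream'.drop m w'') := by
  set T := {a | ∃ᶠ i in atTop, w i = a}
  set x := Stream'.take m w'
  have hexhaust : ∀ a ∉ T, ∀ k, (Stream'.take k w).count a ≤ x.count a := by
    intro a ha k
    have hx : parikhInf w' a = x.count a := parikhInf_eq_count_take fun i hi hia =>
      ha (hia ▸ (isFairWord_drop_iff.1 hm).1 i hi)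
    exact_mod_cast (count_take_le_parikhInf w a k).trans (hw ▸ hx).le
  have hev : ∀ᶠ k in atTop, 1 ≤ k ∧ IsFairWord T (Stream'.drop k w) ∧
      ∀ a, x.count a ≤ (Stream'.take k w).count a :=
    (eventually_ge_atTop 1).and <| (eventually_isFairWord_drop w).and <| eventually_all.2 fun a =>
      eventually_le_count_take (hw ▸ count_take_le_parikhInf w' a m)
  obtain ⟨k, hk, hfair, hcount⟩ := hev.exists
  set L := (Stream'.take k w).diff x
  have hperm : (x ++ L).Perm (Stream'.take k w) :=
    List.subperm_append_diff_self_of_count_le fun a _ => hcount a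
  have hL : ∀ a ∈ L, a ∈ T := fun a ha => by_contra fun haT => by
    have := List.count_pos_iff.2 ha
    rw [List.count_diff] at this
    have := hexhaust a haT k
    omega
  refine ⟨k, hk, x ++ₛ (L ++ₛ Stream'.drop k w), kWinPerm_append_append_drop hperm,
    fun j hj => (take_append_apply_of_lt w' _ hj).symm, ?_⟩
  rw [drop_take_append w' (L ++ₛ Stream'.drop k w) m]
  exact hfair.append hL

lemma jumpLang_subset_eWinLang_fairTailAutomaton [Fintype A] (M : BuchiAutomaton A) :
    JumpLang M ⊆ EWinLang M.fairTailAutomaton := by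
  rintro w ⟨w', hpar, hw'⟩
  have hT : {a | ∃ᶠ i in atTop, w' i = a} = {a | ∃ᶠ i in atTop, w i = a} := by
    ext a
    exact (parikhInf_eq_top_iff.symm.trans (by rw [hpar])).trans parikhInf_eq_top_iff
  obtain ⟨m, hm⟩ := (eventually_isFairWord_drop w').exists
  rw [hT] at hm
  obtain ⟨q, hreach, hq⟩ := (mem_lang_iff_reaches m).1 hw'
  obtain ⟨k, hk, w'', hperm, hagree, hfair⟩ := exists_kWinPerm_of_parikhInf_eq hpar hm
  exact ⟨k, hk, w'', hperm,
    (hreach.congr hagree).mem_lang_fairTailAutomaton ⟨_, hq, hm⟩ hfair⟩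

end Main

/-- Every jumping language of a Büchi automaton is the `∃`-window jumping
language of some Büchi automaton. -/
theorem jumpLang_is_eWinLang (A : Type) [Fintype A] (M : BuchiAutomaton A) :
    ∃ B : BuchiAutomaton A, EWinLang B = JumpLang M :=
  ⟨M.fairTailAutomaton,
    (eWinLang_subset_jumpLang (lang_fairTailAutomaton_subset_jumpLang M)).antisymm
      (jumpLang_subset_eWinLang_fairTailAutomaton M)⟩
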